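/- arXiv:2502.04811 — 5 statements merged into one kernel-verified Lean document; each statement's English description precedes it below -/
import Mathlib

section
/- The limit as ℓ → ∞ of 1 / (1 − ((ℓ+1)/⌈e·ℓ⌉) · ∑_{j=ℓ+2}^{⌈e·ℓ⌉} 1/j) equals e/(e−1). -/
/-!
The sum `∑_{j=ℓ+2}^{⌈eℓ⌉} 1/j` is a difference of harmonic numbers `H_⌈eℓ⌉ - H_{ℓ+1}`, and
`H_n = log n + γ + o(1)`, so it tends to `log (⌈eℓ⌉ / (ℓ + 1)) → log e = 1`. Since
`(ℓ + 1) / ⌈eℓ⌉ → 1/e`, the expression tends to `1 / (1 - 1/e) = e / (e - 1)`.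
-/

open Filter Real Finset Topology

lemma harmonic_sub_harmonic_eq_sum_Ioc {a b : ℕ} (h : a ≤ b) :
    (harmonic b : ℝ) - harmonic a = ∑ j ∈ Ioc a b, (j : ℝ)⁻¹ := by
  induction b, h using Nat.le_induction with
  | base => simp
  | succ b hab ih =>
    rw [sum_Ioc_succ_top hab, ← ih, harmonic_succ]
    push_cast
    ring

-- Both harmonic numbers are `log + γ + o(1)`, so Euler's constant `γ` cancels.
lemma tendsto_sum_Ioc_inv_of_tendsto_div {u v : ℕ → ℕ} {c : ℝ} (hu : Tendsto u atTop atTop)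
    (huv : ∀ᶠ n in atTop, u n ≤ v n)
    (hc : Tendsto (fun n => (v n : ℝ) / u n) atTop (𝓝 c)) (hc₀ : c ≠ 0) :
    Tendsto (fun n => ∑ j ∈ Ioc (u n) (v n), (j : ℝ)⁻¹) atTop (𝓝 (log c)) := by
  have hv : Tendsto v atTop atTop := tendsto_atTop_mono' _ huv hu
  have hγ := tendsto_harmonic_sub_log
  have hlim := ((hγ.comp hv).sub (hγ.comp hu)).add ((continuousAt_log hc₀).tendsto.comp hc)
  rw [sub_self, zero_add] at hlim
  refine hlim.congr' ?_
  filter_upwards [huv, hu.eventually_gt_atTop 0] with n hle hpos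
  have hvpos : 0 < v n := hpos.trans_le hle
  rw [← harmonic_sub_harmonic_eq_sum_Ioc hle, Function.comp_apply, Function.comp_apply,
    Function.comp_apply, log_div (by positivity) (by positivity)]
  ring

lemma tendsto_nat_ceil_mul_div_add_one {a : ℝ} (ha : 0 ≤ a) :
    Tendsto (fun n : ℕ => (⌈a * n⌉₊ : ℝ) / (n + 1)) atTop (𝓝 a) := by
  have h := ((tendsto_nat_ceil_mul_div_atTop ha).comp tendsto_natCast_atTop_atTop).mul
    (tendsto_natCast_div_add_atTop (1 : ℝ))
  rw [mul_one] at h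
  refine h.congr' ?_
  filter_upwards [eventually_gt_atTop 0] with n hn
  simp only [Function.comp_apply]
  field_simp

/-- The limit as ℓ → ∞ of `1 / (1 − ((ℓ+1)/⌈e·ℓ⌉) · ∑_{j=ℓ+2}^{⌈e·ℓ⌉} 1/j)`
equals `e/(e−1)`. -/
theorem tendsto_pos_ratio_exp :
    Tendsto (fun ℓ : ℕ =>
        1 / (1 - ((ℓ : ℝ) + 1) / (⌈Real.exp 1 * ℓ⌉₊ : ℝ) *
          ∑ j ∈ Finset.Icc (ℓ + 2) ⌈Real.exp 1 * ℓ⌉₊, (1 : ℝ) / j))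
      atTop (nhds (Real.exp 1 / (Real.exp 1 - 1))) := by
  have he : 1 < exp 1 := one_lt_exp_iff.2 one_pos
  have hratio : Tendsto (fun ℓ : ℕ => (⌈exp 1 * ℓ⌉₊ : ℝ) / (ℓ + 1)) atTop (𝓝 (exp 1)) :=
    tendsto_nat_ceil_mul_div_add_one (exp_pos 1).le
  have hle : ∀ᶠ ℓ : ℕ in atTop, ℓ + 1 ≤ ⌈exp 1 * ℓ⌉₊ := by
    filter_upwards [eventually_ge_atTop 1] with ℓ hℓ
    have h2 : (2 : ℝ) ≤ exp 1 := by have := exp_one_gt_d9; linarith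
    have hℓ' : (1 : ℝ) ≤ ℓ := by exact_mod_cast hℓ
    exact_mod_cast (show (ℓ : ℝ) + 1 ≤ exp 1 * ℓ by nlinarith).trans (Nat.le_ceil _)
  have hsum : Tendsto (fun ℓ : ℕ => ∑ j ∈ Icc (ℓ + 2) ⌈exp 1 * ℓ⌉₊, (1 : ℝ) / j) atTop (𝓝 1) := by
    have h := tendsto_sum_Ioc_inv_of_tendsto_div (tendsto_add_atTop_nat 1) hle
      (by simpa using hratio) (exp_pos 1).ne'
    simp only [← Icc_add_one_left_eq_Ioc, log_exp] at h
    simp only [one_div]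
    exact h
  have hinner := (hratio.inv₀ (exp_pos 1).ne').mul hsum
  simp only [inv_div, mul_one] at hinner
  have hlim := (tendsto_const_nhds (x := (1 : ℝ)).sub hinner).inv₀
    (sub_ne_zero.2 (inv_lt_one_of_one_lt₀ he).ne')
  convert hlim using 2 with ℓ
  · rw [one_div]
  · field_simp
end

section
/- Let k ≥ 1 and consider a single layer with edges having transit times τ₁ ≤ τ₂ ≤ … ≤ τ_k and unit capacity, receiving at most k arrivals at node v at every integer time. If at every time each arriving player is assigned to an edge of currently minimal latency (transit time plus current queue waiting), then no player ever experiences latency exceeding τ_k. -/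
/-!
Let `M` be the largest transit time. By induction on time, every edge satisfies
`τ e + q t e ≤ M`. Given this at time `t`, if some player entering `e` had latency above `M`,
then `e` received at least two players, and by the equilibrium condition every other edge
received at least one; that exceeds the inflow bound of one player per edge. Hence every
entering player has latency at most `M`, and since a used edge releases one player per step,
the invariant passes to time `t + 1`.
-/

open Finset

theorem latency_le_succ_of_greedy {ι : Type*} [Fintype ι] {τ q r : ι → ℕ} {M : ℕ}
    (hbound : ∀ e, τ e + q e ≤ M) (hinflow : ∑ e, r e ≤ Fintype.card ι)
    (hgreedy : ∀ e e', 0 < r e → τ e + q e + r e ≤ τ e' + q e' + r e' + 1)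
    {e : ι} (he : 0 < r e) : τ e + q e + r e ≤ M + 1 := by
  by_contra! hlate
  have hused : ∀ e', 1 ≤ r e' := fun e' => by
    have := hgreedy e e' he
    have := hbound e'
    omega
  have htwice : 1 < r e := by
    have := hbound e
    omega
  have : Fintype.card ι < ∑ e', r e' := by
    simpa using sum_lt_sum (fun e' _ => hused e') ⟨e, mem_univ e, htwice⟩
  omega

theorem add_queue_le_of_greedy {ι : Type*} [Fintype ι] {τ : ι → ℕ} {q r : ℕ → ι → ℕ} {M : ℕ}
    (hτ : ∀ e, τ e ≤ M) (hq0 : ∀ e, q 0 e = 0)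
    (hdyn : ∀ t e, q (t + 1) e = q t e + r t e - min (q t e + r t e) 1)
    (hinflow : ∀ t, ∑ e, r t e ≤ Fintype.card ι)
    (hgreedy : ∀ t e e', 0 < r t e → τ e + q t e + r t e ≤ τ e' + q t e' + r t e' + 1) :
    ∀ t e, τ e + q t e ≤ M := by
  intro t
  induction t with
  | zero => simpa [hq0] using hτ
  | succ t ih =>
    intro e
    have hstep := hdyn t e
    rcases Nat.eq_zero_or_pos (r t e) with hidle | hused
    · have := ih e
      omega
    · have := latency_le_succ_of_greedy ih (hinflow t) (hgreedy t) hused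
      omega

/-- Single-layer discrete queueing model with `k` unit-capacity edges with
nondecreasing transit times `τ`, at most `k` arrivals per integer time step,
each arriving player assigned to an edge of currently minimal latency.
Here `q t e` is the queue length of edge `e` just before the arrivals at time
`t`, and `r t e` is the number of players assigned to edge `e` at time `t`;
each edge with a nonempty queue releases one player per time step. The latency
of the last player assigned to `e` at time `t` is `τ e + q t e + r t e − 1`.
Conclusion: no player ever experiences latency exceeding `τ_k`, the largest
transit time. -/
theorem equilibrium_latency_le_max (k : ℕ) (hk : 1 ≤ k)
    (τ : Fin k → ℕ) (hτ : Monotone τ)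
    (q r : ℕ → Fin k → ℕ)
    (hq0 : ∀ e, q 0 e = 0)
    (hdyn : ∀ t e, q (t + 1) e = q t e + r t e - min (q t e + r t e) 1)
    (hinflow : ∀ t, ∑ e, r t e ≤ k)
    (hgreedy : ∀ t e e', 0 < r t e →
      τ e + q t e + r t e ≤ τ e' + q t e' + r t e' + 1) :
    ∀ t e, 0 < r t e →
      τ e + q t e + r t e ≤ τ ⟨k - 1, Nat.sub_lt hk Nat.one_pos⟩ + 1 := by
  have hτmax : ∀ e : Fin k, τ e ≤ τ ⟨k - 1, Nat.sub_lt hk Nat.one_pos⟩ :=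
    fun e => hτ (Fin.le_def.2 (Nat.le_sub_one_of_lt e.isLt))
  have hinflow' : ∀ t, ∑ e, r t e ≤ Fintype.card (Fin k) := by simpa using hinflow
  intro t e he
  exact latency_le_succ_of_greedy (add_queue_le_of_greedy hτmax hq0 hdyn hinflow' hgreedy t)
    (hinflow' t) (hgreedy t) he
end

section
/- Consider a linear multigraph layer structure where in layer j (for 1 ≤ j ≤ k−ℓ) there are k−j+1 'fast' edges of transit time 1 with unit capacity. Suppose n packets are all released at node v₀ at time 0, and at each node, packets split evenly among the fast edges of the next layer (FIFO, one packet per edge per time step). Prove by induction: for every 1 ≤ j ≤ k−ℓ, exactly k−j+1 packets arrive at node v_j at each integer time t with j ≤ t ≤ n/(k−j+1) + j − 1, provided (k−j+1) divides n for all such j. -/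
/-!
Track cumulative arrivals rather than arrivals. If the `c` servers feeding a layer deliver a
capped ramp `min n (c * (t - a))` and the layer has `m ≤ c` servers, its queue never empties
before the input is exhausted, so the layer emits exactly `m` packets per step and its cumulative
output is again a capped ramp, of slope `m` and delayed by one step. Layer by layer, the
cumulative arrivals at `v_j` form the ramp of slope `k - j + 1` starting at time `j`, whose
increments equal the slope for as long as the cap `n` is not reached.
-/

open Finset

/-- The cumulative count of a source that emits `c` packets per step at times `a + 1, a + 2, …`
until `N` packets have been emitted (the last batch is truncated if `c ∤ N`). -/
def ramp (N c a t : ℕ) : ℕ := min N (c * (t - a))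

lemma ramp_succ_succ (N c a t : ℕ) : ramp N c (a + 1) (t + 1) = ramp N c a t := by
  simp [ramp]

lemma ramp_succ_eq_cap {N c : ℕ} (hN : N ≤ c) (t : ℕ) : ramp N c 0 (t + 1) = N := by
  have : c ≤ c * (t + 1) := Nat.le_mul_of_pos_right c t.succ_pos
  simp only [ramp, Nat.sub_zero]
  omega

theorem layer_cumsum_eq_ramp {N m c a : ℕ} (hmc : m ≤ c) {F g : ℕ → ℕ}
    (hF : ∀ t, F t = ramp N c a (t + 1))
    (hg : ∀ t, g (t + 1) = min m (F t - ∑ s ∈ range t, g (s + 1))) (t : ℕ) :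
    ∑ s ∈ range t, g (s + 1) = ramp N m a t := by
  induction t with
  | zero => simp [ramp]
  | succ t ih =>
    rw [sum_range_succ, hg, ih, hF]
    simp only [ramp]
    rcases lt_or_ge t a with hta | hat
    · simp [Nat.sub_eq_zero_of_le hta.le, Nat.sub_eq_zero_of_le (Nat.succ_le_of_lt hta)]
    · rw [Nat.sub_add_comm hat]
      have hslope : m * (t - a + 1) ≤ c * (t - a + 1) := Nat.mul_le_mul_right _ hmc
      rw [mul_add_one, mul_add_one] at *
      omega

theorem eq_of_cumsum_eq_ramp {N m a : ℕ} {g : ℕ → ℕ}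
    (hg : ∀ t, ∑ s ∈ range t, g (s + 1) = ramp N m a t) {t : ℕ} (hat : a < t)
    (htN : t ≤ N / m + a) : g t = m := by
  obtain ⟨t, rfl⟩ : ∃ u, t = u + 1 := ⟨t - 1, by omega⟩
  have hstep := hg (t + 1)
  rw [sum_range_succ, hg t] at hstep
  have hcap : m * (t + 1 - a) ≤ N :=
    (Nat.mul_le_mul_left m (by omega : t + 1 - a ≤ N / m)).trans (Nat.mul_div_le N m)
  simp only [ramp] at hstep
  rw [Nat.sub_add_comm (Nat.le_of_lt_succ hat), mul_add_one] at hcap hstep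
  omega

theorem chain_cumsum_eq_ramp {n k L : ℕ} {arr : ℕ → ℕ → ℕ}
    (h0 : ∀ t, arr 0 t = if t = 0 then n else 0)
    (hinit : ∀ j, j + 1 ≤ L → arr (j + 1) 0 = 0)
    (hdyn : ∀ j, j + 1 ≤ L → ∀ t,
      arr (j + 1) (t + 1) =
        min (k - j)
          ((∑ s ∈ range (t + 1), arr j s) - (∑ s ∈ range t, arr (j + 1) (s + 1)))) :
    ∀ j, j + 1 ≤ L → ∀ t, ∑ s ∈ range t, arr (j + 1) (s + 1) = ramp n (k - j) j t := by
  intro j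
  induction j with
  | zero =>
    intro hL
    -- the initial burst of `n` packets is a ramp of any slope `c ≥ n`; take one that is also `≥ k`
    refine layer_cumsum_eq_ramp (c := n + k) (by omega) (fun t => ?_) (hdyn 0 hL)
    rw [ramp_succ_eq_cap (by omega), sum_range_succ']
    simp [h0]
  | succ j ih =>
    intro hL
    refine layer_cumsum_eq_ramp (c := k - j) (by omega) (fun t => ?_) (hdyn (j + 1) hL)
    rw [sum_range_succ', hinit j (by omega), ih (by omega), add_zero, ramp_succ_succ]

theorem shrinking_chain_arrivals_general (n k ℓ : ℕ)
    (arr : ℕ → ℕ → ℕ)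
    (h0 : ∀ t, arr 0 t = if t = 0 then n else 0)
    (hinit : ∀ j, j + 1 ≤ k - ℓ → arr (j + 1) 0 = 0)
    (hdyn : ∀ j, j + 1 ≤ k - ℓ → ∀ t,
      arr (j + 1) (t + 1) =
        min (k - j)
          ((∑ s ∈ Finset.range (t + 1), arr j s) -
            (∑ s ∈ Finset.range t, arr (j + 1) (s + 1)))) :
    ∀ j, 1 ≤ j → j ≤ k - ℓ → ∀ t, j ≤ t → t ≤ n / (k - j + 1) + j - 1 →
      arr j t = k - j + 1 := by
  intro j hj1 hjL t hjt htN
  obtain ⟨i, rfl⟩ : ∃ i, j = i + 1 := ⟨j - 1, by omega⟩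
  have hslope : k - (i + 1) + 1 = k - i := by omega
  rw [hslope] at htN ⊢
  exact eq_of_cumsum_eq_ramp (chain_cumsum_eq_ramp h0 hinit hdyn i hjL) (by omega) (by omega)

/-- Shrinking chain of parallel links: `arr j t` is the number of packets
arriving at node `v_j` at time `t`. All `n` packets are released at `v₀` at
time `0`; layer `j+1` (edges from `v_j` to `v_{j+1}`) consists of `k−j`
parallel FIFO unit-capacity edges of transit time `1`, each releasing one
packet per time step, so the number of packets arriving at `v_{j+1}` at time
`t+1` equals the minimum of `k−j` and the current backlog at `v_j`.
If `(k−j+1) ∣ n` for all `1 ≤ j ≤ k−ℓ`, then exactly `k−j+1` packets arrive at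
`v_j` at each time `t` with `j ≤ t ≤ n/(k−j+1) + j − 1`. -/
theorem shrinking_chain_arrivals (n k ℓ : ℕ) (hn : 0 < n) (hk : 0 < k)
    (hℓ : ℓ < k)
    (arr : ℕ → ℕ → ℕ)
    (h0 : ∀ t, arr 0 t = if t = 0 then n else 0)
    (hinit : ∀ j, j + 1 ≤ k - ℓ → arr (j + 1) 0 = 0)
    (hdyn : ∀ j, j + 1 ≤ k - ℓ → ∀ t,
      arr (j + 1) (t + 1) =
        min (k - j)
          ((∑ s ∈ Finset.range (t + 1), arr j s) -
            (∑ s ∈ Finset.range t, arr (j + 1) (s + 1))))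
    (hdvd : ∀ j, 1 ≤ j → j ≤ k - ℓ → (k - j + 1) ∣ n) :
    ∀ j, 1 ≤ j → j ≤ k - ℓ → ∀ t, j ≤ t → t ≤ n / (k - j + 1) + j - 1 →
      arr j t = k - j + 1 :=
  shrinking_chain_arrivals_general n k ℓ arr h0 hinit hdyn
end

section
/- In the shrinking-chain instance, the last (n-th) packet arrives at node v_j at time n/(k−j+1) + j − 1 for each 1 ≤ j ≤ k−ℓ; in particular the equilibrium completion time is C = (k−ℓ−1) + n/(ℓ+1). -/
/-!
Node `v_{j+1}` behaves as a queue served at rate `k − j` and fed by the arrivals at `v_j`.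
By induction on `j`, those arrivals form a pulse of height `k − j + 1` on the time window
`[j, j + n/(k−j+1))`. A queue fed at least as fast as it is served never idles once its input
has started, so it releases its `n` packets at the full rate `k − j` during
`[j + 1, j + 1 + n/(k−j))`: the arrivals at `v_{j+1}` again form a pulse, whose last step is
`n/(k−j) + j`. The source `v_0`, holding all `n` packets at time 0, is a pulse of height `n` and
length 1, so the same step also starts the induction.
-/

open Finset

def pulse (c a m t : ℕ) : ℕ := if a ≤ t ∧ t < a + m then c else 0

lemma sum_range_pulse (c a m T : ℕ) :
    ∑ s ∈ range T, pulse c a m s = c * (min T (a + m) - min T a) := by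
  induction T with
  | zero => simp
  | succ T ih =>
    rw [sum_range_succ, ih, pulse]
    split_ifs with h
    · rw [show min (T + 1) (a + m) - min (T + 1) a = (min T (a + m) - min T a) + 1 by omega,
        Nat.mul_succ]
    · rw [show min (T + 1) (a + m) - min (T + 1) a = min T (a + m) - min T a by omega, add_zero]

lemma sum_range_pulse_of_le {c a m T : ℕ} (hT : a + m ≤ T) :
    ∑ s ∈ range T, pulse c a m s = c * m := by
  rw [sum_range_pulse, min_eq_right hT, min_eq_right (by omega), Nat.add_sub_cancel_left]

lemma pulse_last {c a m : ℕ} (hm : 0 < m) : pulse c a m (a + m - 1) = c :=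
  if_pos (by omega)

lemma pulse_succ_succ (c a m t : ℕ) : pulse c (a + 1) m (t + 1) = pulse c a m t := by
  simp only [pulse, Nat.add_le_add_iff_right, Nat.add_right_comm a 1 m, Nat.add_lt_add_iff_right]

lemma queue_output_eq_pulse {c m j : ℕ} {A f : ℕ → ℕ}
    (hA_early : ∀ T ≤ j, A T = 0) (hA_le : ∀ T, A T ≤ c * m)
    (hA_ge : ∀ T, min (c * (T - j)) (c * m) ≤ A T) (hf0 : f 0 = 0)
    (hf : ∀ t, f (t + 1) = min c (A (t + 1) - ∑ s ∈ range t, f (s + 1))) :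
    f = pulse c (j + 1) m := by
  funext t
  induction t using Nat.strong_induction_on with
  | _ t ih =>
    rcases t with _ | t
    · simp [hf0, pulse]
    have hout : ∑ s ∈ range t, f (s + 1) = c * (min t (j + m) - min t j) := by
      rw [← sum_range_pulse]
      refine sum_congr rfl fun s hs => ?_
      rw [ih (s + 1) (by simp at hs; omega), pulse_succ_succ]
    rw [hf, hout, pulse]
    rcases lt_or_ge t j with htj | hjt
    · simp [hA_early (t + 1) (by omega), show ¬(j + 1 ≤ t + 1) by omega]
    rcases lt_or_ge t (j + m) with htm | hmt
    · have hlow := hA_ge (t + 1)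
      rw [show t + 1 - j = (t - j) + 1 by omega, Nat.mul_succ,
        min_eq_left (by rw [← Nat.mul_succ]; exact Nat.mul_le_mul_left c (by omega))] at hlow
      rw [min_eq_left htm.le, min_eq_right hjt, if_pos (by omega)]
      omega
    · have hup := hA_le (t + 1)
      rw [min_eq_right hmt, min_eq_right hjt, Nat.add_sub_cancel_left, if_neg (by omega)]
      omega

lemma queue_fed_by_pulse_eq_pulse {c c' m m' j : ℕ} {f : ℕ → ℕ}
    (hcc' : c ≤ c') (hmass : c' * m' = c * m) (hf0 : f 0 = 0)
    (hf : ∀ t, f (t + 1) =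
      min c (∑ s ∈ range (t + 1), pulse c' j m' s - ∑ s ∈ range t, f (s + 1))) :
    f = pulse c (j + 1) m := by
  refine queue_output_eq_pulse (A := fun T => ∑ s ∈ range T, pulse c' j m' s)
    (fun T hT => ?_) (fun T => ?_) (fun T => ?_) hf0 hf <;>
    simp only [sum_range_pulse]
  · simp [show min T (j + m') - min T j = 0 by omega]
  · rw [← hmass]
    exact Nat.mul_le_mul_left c' (by omega)
  · rcases le_or_gt T (j + m') with hT | hT
    · rw [min_eq_left hT, show T - min T j = T - j by omega]
      exact (min_le_left _ _).trans (Nat.mul_le_mul_right _ hcc')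
    · rw [min_eq_right hT.le, show j + m' - min T j = m' by omega, hmass]
      exact min_le_right _ _

theorem shrinking_chain_completion_time_general (n k ℓ : ℕ) (hn : 0 < n)
    (hℓ : ℓ < k)
    (arr : ℕ → ℕ → ℕ)
    (h0 : ∀ t, arr 0 t = if t = 0 then n else 0)
    (hinit : ∀ j, j + 1 ≤ k - ℓ → arr (j + 1) 0 = 0)
    (hdyn : ∀ j, j + 1 ≤ k - ℓ → ∀ t,
      arr (j + 1) (t + 1) =
        min (k - j)
          ((∑ s ∈ Finset.range (t + 1), arr j s) -
            (∑ s ∈ Finset.range t, arr (j + 1) (s + 1))))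
    (hdvd : ∀ j, 1 ≤ j → j ≤ k - ℓ → (k - j + 1) ∣ n) :
    (∀ j, 1 ≤ j → j ≤ k - ℓ →
      (∑ s ∈ Finset.range (n / (k - j + 1) + j), arr j s) = n ∧
        0 < arr j (n / (k - j + 1) + j - 1)) ∧
      (∑ s ∈ Finset.range ((k - ℓ - 1) + n / (ℓ + 1) + 1), arr (k - ℓ) s) = n ∧
        0 < arr (k - ℓ) ((k - ℓ - 1) + n / (ℓ + 1)) := by
  have step : ∀ j, j + 1 ≤ k - ℓ → ∀ c' m', arr j = pulse c' j m' → k - j ≤ c' →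
      c' * m' = n → arr (j + 1) = pulse (k - (j + 1) + 1) (j + 1) (n / (k - (j + 1) + 1)) := by
    intro j hj c' m' harr hc' hmass
    have hrate : k - (j + 1) + 1 = k - j := by omega
    rw [hrate]
    refine queue_fed_by_pulse_eq_pulse (m' := m') hc' ?_ (hinit j hj) fun t => ?_
    · rw [hmass, Nat.mul_div_cancel' (hrate ▸ hdvd (j + 1) (by omega) hj)]
    · rw [hdyn j hj t, harr]
  have hprofile : ∀ j, 1 ≤ j → j ≤ k - ℓ → arr j = pulse (k - j + 1) j (n / (k - j + 1)) := by
    intro j hj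
    induction j, hj using Nat.le_induction with
    | base =>
      intro h1
      have hkn := Nat.le_of_dvd hn (hdvd 1 le_rfl h1)
      refine step 0 h1 n 1 (funext fun t => ?_) (by omega) (mul_one n)
      simp [h0, pulse]
    | succ j hj ih =>
      intro hj'
      exact step j hj' _ _ (ih (by omega)) (by omega) (Nat.mul_div_cancel' (hdvd j hj (by omega)))
  have hdone : ∀ j, 1 ≤ j → j ≤ k - ℓ →
      (∑ s ∈ Finset.range (n / (k - j + 1) + j), arr j s) = n ∧
        0 < arr j (n / (k - j + 1) + j - 1) := by
    intro j hj hjk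
    have hmass := Nat.mul_div_cancel' (hdvd j hj hjk)
    have hm : 0 < n / (k - j + 1) := Nat.pos_of_ne_zero fun h => by simp [h] at hmass; omega
    rw [hprofile j hj hjk, sum_range_pulse_of_le (by omega), hmass, Nat.add_comm _ j, pulse_last hm]
    exact ⟨rfl, by omega⟩
  refine ⟨hdone, ?_⟩
  obtain ⟨hsum, hlast⟩ := hdone (k - ℓ) (by omega) le_rfl
  rw [show k - (k - ℓ) + 1 = ℓ + 1 by omega] at hsum hlast
  generalize n / (ℓ + 1) = M at hsum hlast ⊢
  rw [show k - ℓ - 1 + M + 1 = M + (k - ℓ) by omega, show k - ℓ - 1 + M = M + (k - ℓ) - 1 by omega]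
  exact ⟨hsum, hlast⟩

/-- In the shrinking-chain instance (notation as before: `arr j t` packets
arrive at node `v_j` at time `t`), the last (`n`-th) packet arrives at `v_j`
exactly at time `n/(k−j+1) + j − 1` for each `1 ≤ j ≤ k−ℓ`; in particular, at
the destination `d = v_{k−ℓ}` the equilibrium completion time is
`C = (k−ℓ−1) + n/(ℓ+1)`. -/
theorem shrinking_chain_completion_time (n k ℓ : ℕ) (hn : 0 < n) (hk : 0 < k)
    (hℓ : ℓ < k)
    (arr : ℕ → ℕ → ℕ)
    (h0 : ∀ t, arr 0 t = if t = 0 then n else 0)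
    (hinit : ∀ j, j + 1 ≤ k - ℓ → arr (j + 1) 0 = 0)
    (hdyn : ∀ j, j + 1 ≤ k - ℓ → ∀ t,
      arr (j + 1) (t + 1) =
        min (k - j)
          ((∑ s ∈ Finset.range (t + 1), arr j s) -
            (∑ s ∈ Finset.range t, arr (j + 1) (s + 1))))
    (hdvd : ∀ j, 1 ≤ j → j ≤ k - ℓ → (k - j + 1) ∣ n) :
    (∀ j, 1 ≤ j → j ≤ k - ℓ →
      (∑ s ∈ Finset.range (n / (k - j + 1) + j), arr j s) = n ∧
        0 < arr j (n / (k - j + 1) + j - 1)) ∧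
      (∑ s ∈ Finset.range ((k - ℓ - 1) + n / (ℓ + 1) + 1), arr (k - ℓ) s) = n ∧
        0 < arr (k - ℓ) ((k - ℓ - 1) + n / (ℓ + 1)) :=
  shrinking_chain_completion_time_general n k ℓ hn hℓ arr h0 hinit hdyn hdvd
end

section
/- Let k ≥ 1 and let n packets be distributed over k parallel edges with transit times τ₁ ≤ … ≤ τ_k, where the number of packets on edge j is m_j and the completion time of the last packet on edge j is m_j + τ_j − 1 (packets start at times 0,1,…,m_j−1). If the assignment (m_j) minimizes the makespan max_j (m_j + τ_j − 1) subject to ∑ m_j = n and m_j ≥ 0, then the optimal makespan C* satisfies C* = min { C : ∑_{j: τ_j ≤ C} (C + 1 − τ_j) ≥ n }. -/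
/-!
Sending `m j` packets on path `j` finishes by time `C` exactly when `m j ≤ C + 1 - τ j`
(truncated subtraction makes this `0` for paths longer than `C + 1`). Hence the makespan of `m`
is at most `C` iff `m` fits under the capacities `C + 1 - τ j`, and any `n` packets can be
distributed under capacities summing to at least `n`. So `C` is achievable iff
`n ≤ ∑ j, (C + 1 - τ j)`, and an optimal makespan is the least such `C`.
-/

open Finset

variable {ι : Type*} [Fintype ι]

def makespan (τ m : ι → ℕ) : ℕ :=
  (univ.filter fun j => 0 < m j).sup fun j => m j + τ j - 1

lemma makespan_le_iff {τ m : ι → ℕ} {C : ℕ} : makespan τ m ≤ C ↔ ∀ j, m j ≤ C + 1 - τ j := by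
  simp only [makespan, Finset.sup_le_iff, mem_filter, mem_univ, true_and]
  exact forall_congr' fun j => by omega

lemma sum_filter_le_eq_sum_tsub (τ : ι → ℕ) (C : ℕ) :
    ∑ j ∈ univ.filter (fun j => τ j ≤ C), (C + 1 - τ j) = ∑ j, (C + 1 - τ j) :=
  sum_filter_of_ne fun _ _ h => by omega

lemma exists_le_sum_eq_of_le_sum (c : ι → ℕ) {n : ℕ} (hn : n ≤ ∑ j, c j) :
    ∃ m ≤ c, ∑ j, m j = n := by
  classical
  induction n with
  | zero => exact ⟨0, fun j => Nat.zero_le _, by simp⟩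
  | succ n ih =>
    obtain ⟨m, hmc, rfl⟩ := ih (by omega)
    obtain ⟨j, hj⟩ : ∃ j, m j < c j := by
      by_contra! h
      have := sum_le_sum fun j (_ : j ∈ univ) => h j
      omega
    refine ⟨m + Pi.single j 1, fun i => ?_, by simp [sum_add_distrib]⟩
    rcases eq_or_ne i j with rfl | hi
    · simpa using hj
    · simpa [hi] using hmc i

lemma isLeast_makespan_of_forall_makespan_le {τ m : ι → ℕ} {n : ℕ} (hm : ∑ j, m j = n)
    (hopt : ∀ m' : ι → ℕ, ∑ j, m' j = n → makespan τ m ≤ makespan τ m') :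
    IsLeast {C | n ≤ ∑ j, (C + 1 - τ j)} (makespan τ m) := by
  refine ⟨?_, fun C hC => ?_⟩
  · rw [← hm]
    exact sum_le_sum fun j _ => makespan_le_iff.mp le_rfl j
  · obtain ⟨m', hm'c, hm'⟩ := exists_le_sum_eq_of_le_sum _ hC
    exact (hopt m' hm').trans (makespan_le_iff.mpr hm'c)

theorem optimal_makespan_characterization_general (k n : ℕ)
    (τ : Fin k → ℕ)
    (m : Fin k → ℕ) (hm : ∑ j, m j = n)
    (hopt : ∀ m' : Fin k → ℕ, ∑ j, m' j = n →
      (Finset.univ.filter fun j => 0 < m j).sup (fun j => m j + τ j - 1) ≤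
        (Finset.univ.filter fun j => 0 < m' j).sup (fun j => m' j + τ j - 1)) :
    (Finset.univ.filter fun j => 0 < m j).sup (fun j => m j + τ j - 1) =
      sInf {C : ℕ | n ≤ ∑ j ∈ Finset.univ.filter fun j => τ j ≤ C, (C + 1 - τ j)} := by
  simp only [sum_filter_le_eq_sum_tsub]
  exact (isLeast_makespan_of_forall_makespan_le hm hopt).csInf_eq.symm

/-- Makespan-optimal scheduling of `n` unit packets on `k` parallel paths of
positive lengths `τ₁ ≤ … ≤ τ_k` with unit capacity: if `m j` packets are sent
on path `j` (entering at times `0,…,m j − 1`, so the last one arrives at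
`m j + τ j − 1`), and the assignment `m` minimizes the makespan
`max_{j : m j > 0} (m j + τ j − 1)` among all assignments of the `n` packets,
then the optimal makespan equals
`min { C : ∑_{j : τ_j ≤ C} (C + 1 − τ_j) ≥ n }`. -/
theorem optimal_makespan_characterization (k n : ℕ) (hk : 1 ≤ k) (hn : 1 ≤ n)
    (τ : Fin k → ℕ) (hτpos : ∀ j, 1 ≤ τ j) (hτ : Monotone τ)
    (m : Fin k → ℕ) (hm : ∑ j, m j = n)
    (hopt : ∀ m' : Fin k → ℕ, ∑ j, m' j = n →
      (Finset.univ.filter fun j => 0 < m j).sup (fun j => m j + τ j - 1) ≤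
        (Finset.univ.filter fun j => 0 < m' j).sup (fun j => m' j + τ j - 1)) :
    (Finset.univ.filter fun j => 0 < m j).sup (fun j => m j + τ j - 1) =
      sInf {C : ℕ | n ≤ ∑ j ∈ Finset.univ.filter fun j => τ j ≤ C, (C + 1 - τ j)} :=
  optimal_makespan_characterization_general k n τ m hm hopt
end
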